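/- arXiv:1209.4110 — 4 statements merged into one kernel-verified Lean document; each statement's English description precedes it below -/
import Mathlib

section
/- For every positive integer n, sum_{r=1}^{n-1} (-1)^r * (2(r+1)/(n+r+1)) * C(2r-1, r) * C(n+r+1, 2r+2) = -floor(n/2). -/
/-!
Since `(n + r + 1) C(n + r, 2r + 1) = (2r + 2) C(n + r + 1, 2r + 2)` and `C(2r, r) = 2 C(2r - 1, r)`,
the `r`-th summand is half of `(-1)^r C(2r, r) C(n + r, 2r + 1)`. The sum
`A n = ∑_{r < n} (-1)^r C(2r, r) C(n + r, 2r + 1)`, whose `r = 0` term is `n`, equals `n % 2`: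
Pascal's rule gives `A (n + 1) = A n + B n` with
`B n = ∑_r (-1)^r C(2r, r) C(n + r, 2r) = ∑_r (-1)^r C(n, r) C(n + r, r)`, and `B n = (-1)^n` is
Chu–Vandermonde with a negative upper index, since `(-1)^r C(n + r, r) = C(-n - 1, r)` and
`∑_r C(-n - 1, r) C(n, n - r) = C(-1, n) = (-1)^n`.
-/

open Finset

theorem Ring.choose_neg_natCast_add_one (n r : ℕ) :
    Ring.choose (-(n + 1 : ℤ)) r = (-1) ^ r * (n + r).choose r := by
  rw [Ring.choose_neg, Units.smul_def, Int.coe_negOnePow_natCast,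
    show (n + 1 : ℤ) + r - 1 = ((n + r : ℕ) : ℤ) by push_cast; ring, Ring.choose_natCast,
    smul_eq_mul]

theorem alternating_sum_choose_mul_add_choose (n : ℕ) :
    ∑ r ∈ range (n + 1), (-1 : ℤ) ^ r * n.choose r * (n + r).choose r = (-1) ^ n := by
  have vandermonde := Ring.add_choose_eq n (Commute.all (-(n + 1 : ℤ)) n)
  rw [show -(n + 1 : ℤ) + n = -((0 : ℕ) + 1 : ℤ) by ring, Ring.choose_neg_natCast_add_one,
    Nat.sum_antidiagonal_eq_sum_range_succ
      (fun i j => Ring.choose (-(n + 1 : ℤ)) i * Ring.choose (n : ℤ) j)] at vandermonde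
  simp only [zero_add, Nat.choose_self, Nat.cast_one, mul_one] at vandermonde
  rw [vandermonde]
  refine sum_congr rfl fun r hr => ?_
  rw [Ring.choose_neg_natCast_add_one, Ring.choose_natCast,
    Nat.choose_symm (mem_range_succ_iff.mp hr)]
  ring

theorem alternating_sum_centralBinom_mul_choose (n : ℕ) :
    ∑ r ∈ range (n + 1), (-1 : ℤ) ^ r * (2 * r).choose r * (n + r).choose (2 * r) =
      (-1) ^ n := by
  rw [← alternating_sum_choose_mul_add_choose n]
  refine sum_congr rfl fun r _ => ?_
  have trinomial := Nat.choose_mul (n := n + r) (k := 2 * r) (s := r) (by omega)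
  rw [Nat.add_sub_cancel, show 2 * r - r = r by omega] at trinomial
  rw [mul_assoc, mul_assoc, mul_comm ((2 * r).choose r : ℤ), ← Nat.cast_mul, trinomial]
  push_cast
  ring

theorem alternating_sum_centralBinom_mul_choose_two_mul_add_one (n : ℕ) :
    ∑ r ∈ range n, (-1 : ℤ) ^ r * (2 * r).choose r * (n + r).choose (2 * r + 1) =
      (n % 2 : ℕ) := by
  induction n with
  | zero => simp
  | succ n ih =>
    have pascal : ∀ r, ((n + 1 + r).choose (2 * r + 1) : ℤ) =
        (n + r).choose (2 * r) + (n + r).choose (2 * r + 1) := fun r => by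
      rw [show n + 1 + r = n + r + 1 by ring, Nat.choose_succ_succ, Nat.cast_add]
    simp only [pascal, mul_add, sum_add_distrib, alternating_sum_centralBinom_mul_choose]
    rw [sum_range_succ _ n, Nat.choose_eq_zero_of_lt (by omega : n + n < 2 * n + 1), ih,
      neg_one_pow_eq_pow_mod_two]
    rcases Nat.mod_two_eq_zero_or_one n with h | h <;> simp [Nat.add_mod, h]

theorem alternating_sum_Icc_centralBinom_mul_choose_two_mul_add_one {n : ℕ} (hn : 0 < n) :
    ∑ r ∈ Icc 1 (n - 1), (-1 : ℤ) ^ r * (2 * r).choose r * (n + r).choose (2 * r + 1) =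
      -(2 * (n / 2 : ℕ)) := by
  have full := alternating_sum_centralBinom_mul_choose_two_mul_add_one n
  rw [range_eq_Ico, sum_eq_sum_Ico_succ_bot hn,
    ← Icc_sub_one_right_eq_Ico_of_not_isMin (by simpa using hn.ne')] at full
  simp only [pow_zero, mul_zero, Nat.choose_zero_right, add_zero, zero_add,
    Nat.choose_one_right, one_mul, Nat.cast_one] at full
  omega

theorem Nat.two_mul_choose_two_mul_sub_one {r : ℕ} (hr : 0 < r) :
    2 * (2 * r - 1).choose r = (2 * r).choose r := by
  obtain ⟨s, rfl⟩ := Nat.exists_eq_add_one_of_ne_zero hr.ne'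
  rw [show 2 * (s + 1) - 1 = 2 * s + 1 by omega, show 2 * (s + 1) = 2 * s + 1 + 1 by omega,
    Nat.choose_succ_succ' (2 * s + 1) s, Nat.choose_symm_half, two_mul]

theorem div_mul_choose_two_mul_sub_one_mul_choose {K : Type*} [Field K] [CharZero K]
    (n : ℕ) {r : ℕ} (hr : 0 < r) :
    2 * (r + 1) / (n + r + 1) * ((2 * r - 1).choose r : K) * (n + r + 1).choose (2 * r + 2) =
      (2 * r).choose r * (n + r).choose (2 * r + 1) / 2 := by
  have absorption : ((n + r + 1 : ℕ) : K) * (n + r).choose (2 * r + 1) =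
      (n + r + 1).choose (2 * r + 2) * (2 * r + 2 : ℕ) := by
    exact_mod_cast Nat.add_one_mul_choose_eq (n + r) (2 * r + 1)
  have hne : (n + r + 1 : K) ≠ 0 := by exact_mod_cast Nat.succ_ne_zero (n + r)
  rw [← Nat.two_mul_choose_two_mul_sub_one hr]
  push_cast at absorption ⊢
  field_simp
  linear_combination -((2 * r - 1).choose r : K) * absorption

theorem binomial_sum_floor (n : ℕ) (hn : 0 < n) :
    ∑ r ∈ Finset.Icc 1 (n - 1), (-1 : ℚ) ^ r * (2 * (r + 1) / (n + r + 1)) *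
        ((2 * r - 1).choose r : ℚ) * ((n + r + 1).choose (2 * r + 2) : ℚ)
      = -(n / 2 : ℕ) := by
  have halve : ∀ r ∈ Icc 1 (n - 1), (-1 : ℚ) ^ r * (2 * (r + 1) / (n + r + 1)) *
      ((2 * r - 1).choose r : ℚ) * ((n + r + 1).choose (2 * r + 2) : ℚ) =
      ((-1 : ℤ) ^ r * (2 * r).choose r * (n + r).choose (2 * r + 1) : ℤ) / 2 := fun r hr => by
    rw [mul_assoc, mul_assoc, ← mul_assoc (2 * _ / _),
      div_mul_choose_two_mul_sub_one_mul_choose n (mem_Icc.mp hr).1]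
    push_cast
    ring
  rw [sum_congr rfl halve, ← sum_div, ← Int.cast_sum,
    alternating_sum_Icc_centralBinom_mul_choose_two_mul_add_one hn]
  simp only [Int.cast_neg, Int.cast_mul, Int.cast_ofNat, Int.cast_natCast]
  ring
end

section
/- For n ≥ 1 odd, the derivative of the Zagier polynomial satisfies d/dx B*_n(x) = 1/2 + sum_{j=1}^{floor(n/2)} 2j * B*_{2j}(x). -/
open Finset Polynomial

/-- The Zagier polynomials, evaluated at a real number. -/
noncomputable def zagierBstarPoly (n : ℕ) (x : ℝ) : ℝ :=
  ∑ r ∈ Finset.range (n + 1),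
    ((n + r).choose (2 * r) : ℝ) * (Polynomial.aeval x (Polynomial.bernoulli r)) / (n + r)

/-!
Write `S m = ∑_r C(m+r, 2r) B_r(x)`. Since `r C(n+r, 2r) / (n+r) = C(n+r-1, 2r-1) / 2`,
the derivative of `B*_n` is `½ ∑_s C(n+s, 2s+1) B_s(x)`, which by the hockey-stick identity is
`½ ∑_{m<n} S m`. On the other hand `m C(m+r, 2r) / (m+r) = (C(m+r, 2r) + C(m-1+r, 2r)) / 2`, so
`2m B*_m = S m + S (m-1)` for `m ≥ 1`. For odd `n`, grouping `S 1, …, S (n-1)` in consecutive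
pairs `(2j-1, 2j)` and using `S 0 = B_0 = 1` gives the formula.
-/

theorem Nat.sum_range_add_choose_of_le {s k : ℕ} (h : s ≤ k) (n : ℕ) :
    ∑ m ∈ range n, (m + s).choose k = (n + s).choose (k + 1) := by
  induction n with
  | zero => simp [Nat.choose_eq_zero_of_lt (Nat.lt_succ_of_le h)]
  | succ n ih => rw [sum_range_succ, ih, Nat.add_right_comm, Nat.choose_succ_succ', add_comm]

theorem Nat.two_mul_add_one_mul_choose (m r : ℕ) :
    2 * (m + 1) * (m + 1 + r).choose (2 * r)
      = (m + 1 + r) * ((m + 1 + r).choose (2 * r) + (m + r).choose (2 * r)) := by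
  rcases r with _ | s
  · simp only [add_zero, mul_zero, Nat.choose_zero_right]; ring
  · have hmul := Nat.add_one_mul_choose_eq (m + s + 1) (2 * s + 1)
    have hpascal := Nat.choose_succ_succ' (m + s + 1) (2 * s + 1)
    rw [show m + 1 + (s + 1) = m + s + 1 + 1 by ring, show m + (s + 1) = m + s + 1 by ring,
      show 2 * (s + 1) = 2 * s + 1 + 1 by ring]
    zify at hmul hpascal ⊢
    linear_combination hmul + ((m : ℤ) + s + 2) * hpascal

theorem Finset.sum_range_two_mul_add_one {M : Type*} [AddCommMonoid M] (g : ℕ → M) (K : ℕ) :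
    ∑ m ∈ range (2 * K + 1), g m = g 0 + ∑ j ∈ Icc 1 K, (g (2 * j - 1) + g (2 * j)) := by
  induction K with
  | zero => simp
  | succ K ih =>
    rw [sum_Icc_succ_top (by omega), show 2 * (K + 1) + 1 = 2 * K + 1 + 1 + 1 by ring,
      sum_range_succ, sum_range_succ, ih, show 2 * (K + 1) - 1 = 2 * K + 1 by omega,
      show 2 * (K + 1) = 2 * K + 1 + 1 by ring, add_assoc, add_assoc]

section diagonalChooseSum

variable {R : Type*} [Semiring R]

noncomputable def diagonalChooseSum (f : ℕ → R) (m : ℕ) : R :=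
  ∑ r ∈ range (m + 1), ((m + r).choose (2 * r) : R) * f r

theorem diagonalChooseSum_eq_sum_range (f : ℕ → R) {m N : ℕ} (h : m < N) :
    diagonalChooseSum f m = ∑ r ∈ range N, ((m + r).choose (2 * r) : R) * f r :=
  sum_subset (range_subset_range.2 h) fun r _ hr => by
    rw [Nat.choose_eq_zero_of_lt (by simp only [mem_range] at hr; omega), Nat.cast_zero, zero_mul]

theorem sum_range_diagonalChooseSum (f : ℕ → R) (n : ℕ) :
    ∑ m ∈ range n, diagonalChooseSum f m
      = ∑ s ∈ range n, ((n + s).choose (2 * s + 1) : R) * f s := by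
  calc ∑ m ∈ range n, diagonalChooseSum f m
      = ∑ m ∈ range n, ∑ s ∈ range n, ((m + s).choose (2 * s) : R) * f s :=
        sum_congr rfl fun m hm => diagonalChooseSum_eq_sum_range f (mem_range.1 hm)
    _ = ∑ s ∈ range n, (∑ m ∈ range n, (m + s).choose (2 * s) : ℕ) * f s := by
        rw [sum_comm]; push_cast; simp_rw [sum_mul]
    _ = _ := sum_congr rfl fun s _ => by rw [Nat.sum_range_add_choose_of_le (by omega : s ≤ 2 * s)]

end diagonalChooseSum

theorem two_mul_mul_zagierBstarPoly {m : ℕ} (hm : m ≠ 0) (x : ℝ) :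
    2 * (m : ℝ) * zagierBstarPoly m x
      = diagonalChooseSum (fun r => aeval x (Polynomial.bernoulli r)) m
        + diagonalChooseSum (fun r => aeval x (Polynomial.bernoulli r)) (m - 1) := by
  obtain ⟨k, rfl⟩ := Nat.exists_eq_add_one_of_ne_zero hm
  rw [Nat.add_sub_cancel, diagonalChooseSum_eq_sum_range _ (by omega : k < k + 1 + 1),
    diagonalChooseSum, zagierBstarPoly, mul_sum, ← sum_add_distrib]
  refine sum_congr rfl fun r _ => ?_
  have h := congrArg (Nat.cast (R := ℝ)) (Nat.two_mul_add_one_mul_choose k r)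
  have hpos : ((k + 1 : ℕ) : ℝ) + r ≠ 0 := by positivity
  field_simp
  push_cast at h ⊢
  linear_combination aeval x (Polynomial.bernoulli r) * h

theorem hasDerivAt_zagierBstarPoly (n : ℕ) (x : ℝ) :
    HasDerivAt (zagierBstarPoly n)
      ((∑ s ∈ range n, ((n + s).choose (2 * s + 1) : ℝ) * aeval x (Polynomial.bernoulli s)) / 2) x := by
  have hsum := HasDerivAt.fun_sum (u := range (n + 1)) fun r _ =>
    (((Polynomial.bernoulli r).hasDerivAt_aeval x).const_mul ((n + r).choose (2 * r) : ℝ)).div_const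
      ((n : ℝ) + r)
  refine hsum.congr_deriv ?_
  rw [sum_range_succ', sum_div]
  simp only [Polynomial.derivative_bernoulli, map_mul, map_natCast, CharP.cast_eq_zero, zero_mul,
    map_zero, mul_zero, zero_div, add_zero, Nat.add_sub_cancel]
  refine sum_congr rfl fun s _ => ?_
  have h := congrArg (Nat.cast (R := ℝ)) (Nat.add_one_mul_choose_eq (n + s) (2 * s + 1))
  have hpos : (n : ℝ) + (s + 1 : ℕ) ≠ 0 := by positivity
  field_simp
  rw [show n + (s + 1) = n + s + 1 by ring, show 2 * (s + 1) = 2 * s + 1 + 1 by ring]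
  push_cast at h ⊢
  linear_combination -aeval x (Polynomial.bernoulli s) * h

theorem zagierBstarPoly_deriv_odd_general (n : ℕ) (hno : Odd n) (x : ℝ) :
    deriv (zagierBstarPoly n) x
      = 1 / 2 + ∑ j ∈ Finset.Icc 1 (n / 2), (2 * (j : ℝ)) * zagierBstarPoly (2 * j) x := by
  obtain ⟨K, rfl⟩ := hno
  let S := diagonalChooseSum (fun r => aeval x (Polynomial.bernoulli r))
  have hS0 : S 0 = 1 := by simp [S, diagonalChooseSum]
  have hterm : ∀ j ∈ Icc 1 K, (2 * (j : ℝ)) * zagierBstarPoly (2 * j) x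
      = (S (2 * j - 1) + S (2 * j)) / 2 := fun j hj => by
    have h := two_mul_mul_zagierBstarPoly (by have := (mem_Icc.1 hj).1; omega : 2 * j ≠ 0) x
    push_cast at h
    linear_combination h / 2
  rw [(hasDerivAt_zagierBstarPoly _ x).deriv, ← sum_range_diagonalChooseSum,
    sum_range_two_mul_add_one, show (2 * K + 1) / 2 = K by omega, sum_congr rfl hterm]
  change (S 0 + _) / 2 = _
  rw [hS0, add_div, sum_div]

theorem zagierBstarPoly_deriv_odd (n : ℕ) (hn : 1 ≤ n) (hno : Odd n) (x : ℝ) :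
    deriv (zagierBstarPoly n) x
      = 1 / 2 + ∑ j ∈ Finset.Icc 1 (n / 2), (2 * (j : ℝ)) * zagierBstarPoly (2 * j) x :=
  zagierBstarPoly_deriv_odd_general n hno x
end

section
/- For every positive integer n, 2 B*_{2n} = χ(n) + sum_{r=0}^{n} (-1)^{n+r} C(n+r, 2r) B_{2r}/(n+r), where χ(n) equals 1 if n ≡ 1 (mod 3), -1 if n ≡ 2 (mod 3), and 0 if n ≡ 0 (mod 3). -/
/-!
Put `u = x + x⁻¹ - 2`. Then `x ^ m + x ^ (-m) = C_m(u + 2)`, where `C_m` is the Chebyshev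
`C`-polynomial (`C_m(x + x⁻¹) = x ^ m + x ^ (-m)`), and the coefficient of `u ^ r` in `C_m(u + 2)`
is `2m/(m+r) · choose (m+r) (2r)`. So, writing `L_b` for the linear functional `u ^ r ↦ b r`, the sum
`∑ choose (m+r) (2r) b_r / (m+r)` equals `L_b(C_m(X + 2)) / 2m`; in particular
`4n B*_{2n} = L(C_{2n}(X + 2))` for the Bernoulli functional `L = L_B`.

Now `C_{2n} = C_n ∘ (X² - 2)`, so `C_{2n}(X + 2) = q(X + 2)` with `q = C_n(X² - 2)`. The Bernoulli
functional satisfies `L(p(X + 1)) = L(p) + p'(0)`, whence `L(q(X + 2)) = L(q) + 2 C_n'(-1)`. The parity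
`C_n(-X) = (-1)ⁿ C_n` rewrites `L(q)` as the alternating sum over `B_{2r}`, and `C_n'(-1) = n χ(n)`
because `-1 = ω + ω⁻¹` for a primitive cube root of unity `ω`.
-/

open Finset

/-- The modified Bernoulli numbers of Zagier. -/
noncomputable def zagierBstar (n : ℕ) : ℚ :=
  ∑ r ∈ Finset.range (n + 1), ((n + r).choose (2 * r) : ℚ) * bernoulli r / (n + r)

open Polynomial hiding bernoulli

/-- The coefficients of `C_m(X + 2)`, i.e. `2m/(m+r) · choose (m+r) (2r)` for `m > 0`; at
`m = r = 0` the truncated subtraction `0 - 1 = 0` gives the constant term `2` of `C_0 = 2`. -/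
def shiftedChebyshevCoeff (m r : ℕ) : ℕ := (m + r).choose (2 * r) + (m + r - 1).choose (2 * r)

lemma shiftedChebyshevCoeff_eq_zero {m r : ℕ} (h : m < r) : shiftedChebyshevCoeff m r = 0 := by
  simp [shiftedChebyshevCoeff, Nat.choose_eq_zero_of_lt, show m + r < 2 * r by omega,
    show m + r - 1 < 2 * r by omega]

lemma shiftedChebyshevCoeff_add_two (m r : ℕ) :
    shiftedChebyshevCoeff (m + 2) (r + 1) + shiftedChebyshevCoeff m (r + 1) =
      shiftedChebyshevCoeff (m + 1) r + 2 * shiftedChebyshevCoeff (m + 1) (r + 1) := by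
  simp only [shiftedChebyshevCoeff, show m + 2 + (r + 1) = m + r + 2 + 1 by omega,
    show m + (r + 1) = m + r + 1 by omega, show m + 1 + r = m + r + 1 by omega,
    show m + 1 + (r + 1) = m + r + 1 + 1 by omega, show 2 * (r + 1) = 2 * r + 1 + 1 by omega,
    Nat.add_sub_cancel, Nat.choose_succ_succ']
  omega

lemma two_mul_mul_choose_eq_mul_shiftedChebyshevCoeff {m : ℕ} (r : ℕ) (hm : 0 < m) :
    2 * m * (m + r).choose (2 * r) = (m + r) * shiftedChebyshevCoeff m r := by
  by_cases hr : r ≤ m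
  · have h := Nat.choose_mul_succ_eq (m + r - 1) (2 * r)
    rw [show m + r - 1 + 1 = m + r by omega, show m + r - 2 * r = m - r by omega] at h
    rw [shiftedChebyshevCoeff, Nat.mul_add, mul_comm (m + r) ((m + r - 1).choose _), h,
      ← show m + r + (m - r) = 2 * m by omega]
    ring
  · rw [shiftedChebyshevCoeff_eq_zero (by omega), Nat.choose_eq_zero_of_lt (by omega)]
    simp

namespace Polynomial.Chebyshev

variable (R : Type*) [CommRing R]

lemma C_natCast_add_two (n : ℕ) : C R (n + 2 : ℕ) = X * C R (n + 1 : ℕ) - C R n := by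
  push_cast
  exact C_add_two R n

lemma C_comp_neg_X (n : ℕ) : (C R n).comp (-X) = (-1 : R) ^ n • C R n := by
  induction n using Nat.twoStepInduction with
  | zero => simp
  | one => simp
  | more n ih ih' =>
    rw [C_natCast_add_two, sub_comp, mul_comp, X_comp, ih, ih']
    simp only [smul_eq_C_mul, map_pow, map_neg, map_one]
    ring

lemma C_comp_X_add_two_natCast_add_two (n : ℕ) :
    (C R (n + 2 : ℕ)).comp (X + 2) =
      (X + 2) * (C R (n + 1 : ℕ)).comp (X + 2) - (C R n).comp (X + 2) := by
  rw [C_natCast_add_two, sub_comp, mul_comp, X_comp]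

lemma coeff_C_comp_X_add_two (m r : ℕ) :
    ((C R m).comp (X + 2)).coeff r = shiftedChebyshevCoeff m r := by
  induction m using Nat.twoStepInduction generalizing r with
  | zero =>
    rcases r with _ | r
    · simp [shiftedChebyshevCoeff]
    · simp [shiftedChebyshevCoeff_eq_zero (Nat.succ_pos r)]
  | one =>
    rcases r with _ | _ | r
    · simp [shiftedChebyshevCoeff]
    · simp [shiftedChebyshevCoeff]
    · simp [shiftedChebyshevCoeff_eq_zero (show 1 < r + 2 by omega), coeff_X]
  | more n ih ih' =>
    rw [C_comp_X_add_two_natCast_add_two, coeff_sub, add_mul, coeff_add, coeff_ofNat_mul]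
    rcases r with _ | r
    · rw [mul_coeff_zero, ih, ih']
      norm_num [shiftedChebyshevCoeff]
    · rw [coeff_X_mul, ih, ih', ih', sub_eq_iff_eq_add]
      exact_mod_cast congrArg (Nat.cast : ℕ → R) (shiftedChebyshevCoeff_add_two n r).symm

lemma natDegree_C_comp_X_add_two_le (m : ℕ) : ((C R m).comp (X + 2)).natDegree ≤ m :=
  natDegree_le_iff_coeff_eq_zero.mpr fun r hr => by
    rw [coeff_C_comp_X_add_two, shiftedChebyshevCoeff_eq_zero (by exact_mod_cast hr), Nat.cast_zero]

lemma C_comp_X_sq_sub_two (n : ℕ) :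
    (C R n).comp (X ^ 2 - 2) = (-1 : R) ^ n • ((C R n).comp (X + 2)).comp (-X ^ 2) := by
  calc (C R n).comp (X ^ 2 - 2) = ((C R n).comp (-X)).comp (2 - X ^ 2) := by
        rw [comp_assoc, neg_comp, X_comp, neg_sub]
    _ = _ := by
        rw [C_comp_neg_X, smul_comp, comp_assoc, add_comp, X_comp, neg_add_eq_sub]
        norm_num

/-- The period `3` comes from `-1 = ω + ω⁻¹` with `ω` a primitive cube root of unity. -/
lemma eval_neg_one_C_and_derivative_C (n : ℕ) :
    (C R n).eval (-1) = (if n % 3 = 0 then 2 else -1) ∧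
      (derivative (C R n)).eval (-1) =
        n * (if n % 3 = 1 then 1 else if n % 3 = 2 then -1 else 0) := by
  induction n using Nat.twoStepInduction with
  | zero => simp
  | one => simp
  | more n ih ih' =>
    rw [C_natCast_add_two, derivative_sub, derivative_mul, derivative_X, one_mul]
    simp only [eval_sub, eval_add, eval_mul, eval_X, ih.1, ih'.1, ih.2, ih'.2]
    have h3 : n % 3 = 0 ∨ n % 3 = 1 ∨ n % 3 = 2 := by omega
    rcases h3 with h | h | h <;>
      norm_num [h, show (n + 1) % 3 = (n % 3 + 1) % 3 by omega,
        show (n + 2) % 3 = (n % 3 + 2) % 3 by omega] <;>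
      ring

end Polynomial.Chebyshev

namespace Polynomial

variable {R : Type*} [CommRing R] (b : ℕ → R)

noncomputable def umbral : R[X] →ₗ[R] R :=
  lsum fun n => LinearMap.toSpanSingleton R R (b n)

@[simp]
lemma umbral_monomial (n : ℕ) (a : R) : umbral b (monomial n a) = a * b n := by
  simp [umbral, sum_monomial_index]

lemma umbral_eq_sum_range {p : R[X]} {N : ℕ} (h : p.natDegree < N) :
    umbral b p = ∑ r ∈ range N, p.coeff r * b r := by
  simp [umbral, p.sum_over_range' _ N h]

lemma umbral_comp_neg_X_sq (p : R[X]) :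
    umbral b (p.comp (-X ^ 2)) = umbral (fun r => (-1) ^ r * b (2 * r)) p := by
  induction p using Polynomial.induction_on' with
  | add p q hp hq => simp only [add_comp, map_add, hp, hq]
  | monomial m a =>
    have h : (monomial m a).comp (-X ^ 2) = monomial (2 * m) ((-1) ^ m * a) := by
      rw [monomial_comp, neg_pow, ← pow_mul, ← C_mul_X_pow_eq_monomial, map_mul, map_pow, map_neg,
        map_one]
      ring
    simp only [h, umbral_monomial]
    ring

end Polynomial

lemma umbral_bernoulli_X_add_one_pow (m : ℕ) :
    umbral bernoulli ((X + 1 : ℚ[X]) ^ m) = bernoulli m + if m = 1 then 1 else 0 := by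
  have hdeg : ((X + 1 : ℚ[X]) ^ m).natDegree < m + 1 := by
    rw [← C_1, natDegree_pow_X_add_C]; omega
  rw [umbral_eq_sum_range _ hdeg, sum_range_succ, coeff_X_add_one_pow, Nat.choose_self]
  simp only [coeff_X_add_one_pow, _root_.sum_bernoulli]
  ring

lemma umbral_bernoulli_comp_X_add_one (p : ℚ[X]) :
    umbral bernoulli (p.comp (X + 1)) = umbral bernoulli p + p.derivative.eval 0 := by
  induction p using Polynomial.induction_on' with
  | add p q hp hq =>
    simp only [add_comp, map_add, eval_add, hp, hq]
    ring
  | monomial m a =>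
    rw [monomial_comp, ← smul_eq_C_mul, map_smul, umbral_bernoulli_X_add_one_pow, umbral_monomial,
      derivative_monomial, eval_monomial]
    rcases m with _ | _ | m <;> simp [mul_add]

lemma umbral_bernoulli_comp_X_add_two (p : ℚ[X]) :
    umbral bernoulli (p.comp (X + 2)) =
      umbral bernoulli p + p.derivative.eval 0 + p.derivative.eval 1 := by
  have h : (X + 2 : ℚ[X]) = (X + 1).comp (X + 1) := by
    rw [add_comp, X_comp, one_comp]; ring
  rw [h, ← comp_assoc, umbral_bernoulli_comp_X_add_one, umbral_bernoulli_comp_X_add_one,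
    derivative_comp]
  simp [eval_comp]

lemma sum_choose_mul_div_eq_umbral {K : Type*} [Field K] [CharZero K] (b : ℕ → K) {m : ℕ}
    (hm : 0 < m) :
    ∑ r ∈ range (m + 1), ((m + r).choose (2 * r) : K) * b r / (m + r) =
      umbral b ((Chebyshev.C K m).comp (X + 2)) / (2 * m) := by
  rw [umbral_eq_sum_range _ (Nat.lt_succ_of_le (Chebyshev.natDegree_C_comp_X_add_two_le K m)),
    sum_div]
  refine sum_congr rfl fun r _ => ?_
  have key : (2 * m * (m + r).choose (2 * r) : K) = (m + r) * shiftedChebyshevCoeff m r := by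
    exact_mod_cast two_mul_mul_choose_eq_mul_shiftedChebyshevCoeff r hm
  have hmr : (m + r : K) ≠ 0 := by exact_mod_cast (by omega : m + r ≠ 0)
  have hm' : (2 * m : K) ≠ 0 := by exact_mod_cast (by omega : 2 * m ≠ 0)
  rw [Chebyshev.coeff_C_comp_X_add_two, div_eq_div_iff hmr hm']
  linear_combination b r * key

lemma sum_neg_one_pow_mul_choose_mul_bernoulli_div_eq_umbral {n : ℕ} (hn : 0 < n) :
    ∑ r ∈ range (n + 1),
        (-1 : ℚ) ^ (n + r) * ((n + r).choose (2 * r) : ℚ) * bernoulli (2 * r) / (n + r) =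
      umbral bernoulli ((Chebyshev.C ℚ n).comp (X ^ 2 - 2)) / (2 * n) := by
  rw [Chebyshev.C_comp_X_sq_sub_two, map_smul, umbral_comp_neg_X_sq, smul_eq_mul, mul_div_assoc,
    ← sum_choose_mul_div_eq_umbral _ hn, mul_sum]
  refine sum_congr rfl fun r _ => ?_
  ring

theorem zagierBstar_even_formula (n : ℕ) (hn : 0 < n) :
    2 * zagierBstar (2 * n) =
      (if n % 3 = 1 then (1 : ℚ) else if n % 3 = 2 then -1 else 0) +
      ∑ r ∈ Finset.range (n + 1), (-1 : ℚ) ^ (n + r) *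
        ((n + r).choose (2 * r) : ℚ) * bernoulli (2 * r) / (n + r) := by
  set q := (Chebyshev.C ℚ n).comp (X ^ 2 - 2)
  have hdouble : (Chebyshev.C ℚ (2 * n : ℕ)).comp (X + 2) = q.comp (X + 2) := by
    rw [Nat.cast_mul, Nat.cast_two, mul_comm, Chebyshev.C_mul, Chebyshev.C_two, comp_assoc]
  have hq0 : q.derivative.eval 0 = 0 := by simp [q, derivative_comp]
  have hq1 : q.derivative.eval 1 = 2 * (derivative (Chebyshev.C ℚ n)).eval (-1) := by
    norm_num [q, derivative_comp, eval_comp]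
  rw [zagierBstar, sum_choose_mul_div_eq_umbral bernoulli (by omega), hdouble,
    umbral_bernoulli_comp_X_add_two, sum_neg_one_pow_mul_choose_mul_bernoulli_div_eq_umbral hn, hq0,
    hq1, (Chebyshev.eval_neg_one_C_and_derivative_C ℚ n).2]
  field_simp
  push_cast
  ring
end

section
/- For every positive integer n and real x, 2 B*_{2n}(x) - 2 B*_{2n}(x-2) = U_{2n-1}(x/2) + U_{2n-1}((x+1)/2). -/
open Finset Polynomial

/-- Pascal-type recurrence. -/
lemma choose_rec (m s : ℕ) :
    (m + 2).choose (s + 2) + m.choose (s + 2) = 2 * (m + 1).choose (s + 2) + m.choose s := by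
  simp only [Nat.choose_succ_succ, show m + 1 = m + 1 from rfl]
  ring

lemma choose_step (k i : ℕ) :
    ((k + 3 + (i + 1)).choose (2 * (i + 1) + 1) : ℝ)
      + ((k + 1 + (i + 1)).choose (2 * (i + 1) + 1) : ℝ)
      - 2 * ((k + 2 + (i + 1)).choose (2 * (i + 1) + 1) : ℝ)
      = ((k + 2 + i).choose (2 * i + 1) : ℝ) := by
  have h := choose_rec (k + 2 + i) (2 * i + 1)
  rw [show k + 3 + (i + 1) = k + 2 + i + 2 by omega,
      show 2 * (i + 1) + 1 = 2 * i + 1 + 2 by omega,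
      show k + 1 + (i + 1) = k + 2 + i by omega,
      show k + 2 + (i + 1) = k + 2 + i + 1 by omega]
  have h' := congrArg (Nat.cast : ℕ → ℝ) h
  push_cast at h'
  linarith

lemma chebU_eval (k : ℕ) (t : ℝ) :
    (Polynomial.Chebyshev.U ℝ (k : ℤ)).eval (1 + t / 2)
      = ∑ j ∈ Finset.range (k + 1), ((k + 1 + j).choose (2 * j + 1) : ℝ) * t ^ j := by
  induction k using Nat.twoStepInduction with
  | zero => simp [Polynomial.Chebyshev.U_zero]
  | one =>
      norm_num [Polynomial.Chebyshev.U_one, Finset.sum_range_succ]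
      ring
  | more k ih1 ih2 =>
      rw [show ((k + 2 : ℕ) : ℤ) = (k : ℤ) + 2 by push_cast; ring,
        Polynomial.Chebyshev.U_add_two]
      simp only [eval_sub, eval_mul, eval_ofNat, eval_X]
      rw [show (k : ℤ) + 1 = ((k + 1 : ℕ) : ℤ) by push_cast; ring, ih2, ih1]
      -- now a pure sum identity
      have e1 : (∑ j ∈ Finset.range (k + 1 + 1), ((k + 1 + 1 + j).choose (2 * j + 1) : ℝ) * t ^ j)
          = ∑ j ∈ Finset.range (k + 3), ((k + 2 + j).choose (2 * j + 1) : ℝ) * t ^ j := by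
        rw [show k + 1 + 1 = k + 2 from rfl, Finset.sum_range_succ (n := k + 2),
          Nat.choose_eq_zero_of_lt (by omega)]
        simp
      have e2 : (∑ j ∈ Finset.range (k + 1), ((k + 1 + j).choose (2 * j + 1) : ℝ) * t ^ j)
          = ∑ j ∈ Finset.range (k + 3), ((k + 1 + j).choose (2 * j + 1) : ℝ) * t ^ j := by
        have z1 : (k + 1 + (k + 1)).choose (2 * (k + 1) + 1) = 0 :=
          Nat.choose_eq_zero_of_lt (by omega)
        have z2 : (k + 1 + (k + 2)).choose (2 * (k + 2) + 1) = 0 :=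
          Nat.choose_eq_zero_of_lt (by omega)
        rw [Finset.sum_range_succ (n := k + 2), Finset.sum_range_succ (n := k + 1), z1, z2]
        simp
      rw [e1, e2]
      have claim : ∑ j ∈ Finset.range (k + 3),
            (((k + 3 + j).choose (2 * j + 1) : ℝ) + ((k + 1 + j).choose (2 * j + 1) : ℝ)
              - 2 * ((k + 2 + j).choose (2 * j + 1) : ℝ)) * t ^ j
          = ∑ j ∈ Finset.range (k + 2), ((k + 2 + j).choose (2 * j + 1) : ℝ) * t ^ (j + 1) := by
        rw [Finset.sum_range_succ' _ (k + 2)]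
        have h0 : (((k + 3 + 0).choose (2 * 0 + 1) : ℝ) + ((k + 1 + 0).choose (2 * 0 + 1) : ℝ)
            - 2 * ((k + 2 + 0).choose (2 * 0 + 1) : ℝ)) * t ^ 0 = 0 := by
          simp [Nat.choose_one_right]
          push_cast
          ring
        rw [h0, add_zero]
        refine Finset.sum_congr rfl fun i _ => ?_
        rw [choose_step]
      have expand : (2 * (1 + t / 2)) *
            (∑ j ∈ Finset.range (k + 3), ((k + 2 + j).choose (2 * j + 1) : ℝ) * t ^ j)
          = 2 * (∑ j ∈ Finset.range (k + 3), ((k + 2 + j).choose (2 * j + 1) : ℝ) * t ^ j)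
            + ∑ j ∈ Finset.range (k + 3), ((k + 2 + j).choose (2 * j + 1) : ℝ) * t ^ (j + 1) := by
        rw [Finset.mul_sum, Finset.mul_sum, ← Finset.sum_add_distrib]
        exact Finset.sum_congr rfl fun i _ => by ring
      have e3 : (∑ j ∈ Finset.range (k + 3), ((k + 2 + j).choose (2 * j + 1) : ℝ) * t ^ (j + 1))
          = ∑ j ∈ Finset.range (k + 2), ((k + 2 + j).choose (2 * j + 1) : ℝ) * t ^ (j + 1) := by
        rw [Finset.sum_range_succ (n := k + 2), Nat.choose_eq_zero_of_lt (by omega)]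
        simp
      rw [expand, e3, ← claim, show k + 2 + 1 = k + 3 from rfl,
        Finset.mul_sum, ← Finset.sum_add_distrib, ← Finset.sum_sub_distrib]
      exact Finset.sum_congr rfl fun i _ => by ring

lemma bernoulli_comp_add_one (n : ℕ) :
    (Polynomial.bernoulli n).comp (X + 1) =
      Polynomial.bernoulli n + (n : ℚ[X]) * X ^ (n - 1) := by
  apply Polynomial.funext
  intro r
  rw [eval_comp]
  simp only [eval_add, eval_X, eval_one, eval_mul, eval_pow, eval_natCast]
  rw [show r + 1 = 1 + r by ring, Polynomial.bernoulli_eval_one_add]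

lemma aeval_bernoulli_sub_one (n : ℕ) (x : ℝ) :
    Polynomial.aeval x (Polynomial.bernoulli n)
      = Polynomial.aeval (x - 1) (Polynomial.bernoulli n) + n * (x - 1) ^ (n - 1) := by
  have h := congrArg (Polynomial.aeval (x - 1) : ℚ[X] →ₐ[ℚ] ℝ) (bernoulli_comp_add_one n)
  simp only [Polynomial.aeval_comp, map_add, map_mul, map_pow, Polynomial.aeval_X,
    Polynomial.aeval_one, map_natCast] at h
  rw [show x - 1 + 1 = x by ring] at h
  exact h

lemma aeval_bernoulli_sub_two (n : ℕ) (x : ℝ) :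
    Polynomial.aeval x (Polynomial.bernoulli n)
      = Polynomial.aeval (x - 2) (Polynomial.bernoulli n)
        + n * (x - 1) ^ (n - 1) + n * (x - 2) ^ (n - 1) := by
  rw [aeval_bernoulli_sub_one n x, aeval_bernoulli_sub_one n (x - 1),
    show x - 1 - 1 = x - 2 by ring]
  ring

lemma coeff_id (m j : ℕ) :
    2 * ((m + (j + 1)).choose (2 * (j + 1)) : ℝ) * ((j : ℝ) + 1) / ((m : ℝ) + ((j : ℕ) + 1 : ℕ))
      = ((m + j).choose (2 * j + 1) : ℝ) := by
  have h : (m + j + 1) * (m + j).choose (2 * j + 1)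
      = (m + j + 1).choose (2 * j + 2) * (2 * j + 2) := by
    have := Nat.add_one_mul_choose_eq (m + j) (2 * j + 1)
    simpa [Nat.succ_eq_add_one] using this
  have h' := congrArg (Nat.cast : ℕ → ℝ) h
  push_cast at h'
  have hd : ((m : ℝ) + ((j : ℕ) + 1 : ℕ)) ≠ 0 := by
    push_cast
    positivity
  rw [div_eq_iff hd, show m + (j + 1) = m + j + 1 by omega, show 2 * (j + 1) = 2 * j + 2 by omega]
  push_cast
  linarith

lemma chebU_eval' (m : ℕ) (hm : m ≠ 0) (t : ℝ) :
    (Polynomial.Chebyshev.U ℝ ((m : ℤ) - 1)).eval (1 + t / 2)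
      = ∑ j ∈ Finset.range m, ((m + j).choose (2 * j + 1) : ℝ) * t ^ j := by
  obtain ⟨k, rfl⟩ : ∃ k, m = k + 1 := ⟨m - 1, by omega⟩
  rw [show ((k + 1 : ℕ) : ℤ) - 1 = (k : ℤ) by push_cast; ring, chebU_eval]

lemma main_aux (m : ℕ) (x : ℝ) :
    2 * zagierBstarPoly m x - 2 * zagierBstarPoly m (x - 2)
      = ∑ j ∈ Finset.range m,
          ((m + j).choose (2 * j + 1) : ℝ) * ((x - 2) ^ j + (x - 1) ^ j) := by
  unfold zagierBstarPoly
  rw [Finset.mul_sum, Finset.mul_sum, ← Finset.sum_sub_distrib, Finset.sum_range_succ' _ m]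
  have h0 : 2 * (((m + 0).choose (2 * 0) : ℝ) * (Polynomial.aeval x (Polynomial.bernoulli 0))
        / ((m : ℝ) + (0 : ℕ)))
      - 2 * (((m + 0).choose (2 * 0) : ℝ) * (Polynomial.aeval (x - 2) (Polynomial.bernoulli 0))
        / ((m : ℝ) + (0 : ℕ))) = 0 := by
    simp [Polynomial.bernoulli_zero]
  rw [h0, add_zero]
  refine Finset.sum_congr rfl fun j _ => ?_
  rw [aeval_bernoulli_sub_two (j + 1) x]
  simp only [Nat.add_sub_cancel]
  have hc := coeff_id m j
  push_cast at hc ⊢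
  linear_combination ((x - 2) ^ j + (x - 1) ^ j) * hc

theorem zagierBstarPoly_even_shift (n : ℕ) (hn : 0 < n) (x : ℝ) :
    2 * zagierBstarPoly (2 * n) x - 2 * zagierBstarPoly (2 * n) (x - 2)
      = (Polynomial.Chebyshev.U ℝ (2 * (n : ℤ) - 1)).eval (x / 2)
        + (Polynomial.Chebyshev.U ℝ (2 * (n : ℤ) - 1)).eval ((x + 1) / 2) := by
  have hm : 2 * n ≠ 0 := by omega
  rw [main_aux (2 * n) x, show (2 * (n : ℤ) - 1) = ((2 * n : ℕ) : ℤ) - 1 by push_cast; ring,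
    show x / 2 = 1 + (x - 2) / 2 by ring, show (x + 1) / 2 = 1 + (x - 1) / 2 by ring,
    chebU_eval' _ hm, chebU_eval' _ hm]
  simp only [mul_add, Finset.sum_add_distrib]
end
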